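/- Let f : T → ℝ be a bounded harmonic function on T which admits a boundary extension g : ∂T → ℝ, i.e. for ν-almost every ω ∈ ∂T one has lim_{j → −∞} f(ω(j)) = g(ω). Then g is integrable on every sector ∂T_x and f(x) = (1/m_ν(x)) ∫_{∂T_x} g dν for every x ∈ T. -/

import Mathlib

open MeasureTheory
open scoped ENNReal NNReal

/-- The punctured boundary `∂T` of the tree: maps `ω : ℤ → T` with `lev (ω j) = j`
and `par (ω j) = ω (j+1)`. -/
def PBoundary {T : Type*} (par : T → T) (lev : T → ℤ) : Type _ :=
  {ω : ℤ → T // (∀ j : ℤ, lev (ω j) = j) ∧ ∀ j : ℤ, par (ω j) = ω (j + 1)}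

/-- The boundary sector `∂T_x`. -/
def sector {T : Type*} (par : T → T) (lev : T → ℤ) (x : T) : Set (PBoundary par lev) :=
  {ω : PBoundary par lev | ω.1 (lev x) = x}

/-- The σ-algebra on `∂T` generated by the sectors. -/
instance {T : Type*} (par : T → T) (lev : T → ℤ) : MeasurableSpace (PBoundary par lev) :=
  MeasurableSpace.generateFrom (Set.range (sector par lev))

/-- The flow measure `m_ν x = ν (∂T_x)` (as a real number). -/
noncomputable def mnu {T : Type*} (par : T → T) (lev : T → ℤ)
    (ν : Measure (PBoundary par lev)) (x : T) : ℝ :=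
  (ν (sector par lev x)).toReal

/-- A function on `T` is harmonic if `Δf(x) = f(x) - Σ_{y ∈ s(x)} f(y) m_ν(y)/m_ν(x) = 0`
for every vertex `x`. -/
def Harmonic {T : Type*} (par : T → T) (lev : T → ℤ)
    (ν : Measure (PBoundary par lev)) (f : T → ℝ) : Prop :=
  ∀ x : T, f x = ∑ᶠ y ∈ {y : T | par y = x}, f y * (mnu par lev ν y / mnu par lev ν x)

/-!
Harmonicity says that `x ↦ f x * m_ν x` is additive along the splitting of a sector into the
sectors of the children of its vertex. Iterating, the integral over `∂T_x` of the slice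
`ω ↦ f (ω (lev x - n))` is `f x * m_ν x` for every `n`. The slices are bounded by `M` and tend
to `g` almost everywhere, so dominated convergence on the finite measure `ν` restricted to `∂T_x`
makes `g` integrable there with integral `f x * m_ν x`.
-/

open Filter Topology

section

variable {T : Type*} {par : T → T} {lev : T → ℤ}

theorem measurableSet_sector (x : T) : MeasurableSet (sector par lev x) :=
  MeasurableSpace.measurableSet_generateFrom (Set.mem_range_self x)

theorem lev_of_par_eq (hlev : ∀ x : T, lev (par x) = lev x + 1) {x y : T} (h : par y = x) :
    lev y = lev x - 1 := by
  have := hlev y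
  rw [h] at this
  omega

theorem disjoint_sector_of_lev_eq {y z : T} (hlev : lev y = lev z) (hne : y ≠ z) :
    Disjoint (sector par lev y) (sector par lev z) :=
  Set.disjoint_left.2 fun ω (hy : ω.1 (lev y) = y) (hz : ω.1 (lev z) = z) =>
    hne (by rw [← hy, ← hz, hlev])

theorem sector_eq_biUnion_sector_children (hlev : ∀ x : T, lev (par x) = lev x + 1)
    (hfin : ∀ x : T, {y : T | par y = x}.Finite) (x : T) :
    sector par lev x = ⋃ y ∈ (hfin x).toFinset, sector par lev y := by
  ext ω
  simp only [Set.mem_iUnion, Set.Finite.mem_toFinset, Set.mem_ofPred_eq, sector]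
  constructor
  · intro hω
    refine ⟨ω.1 (lev x - 1), ?_, by rw [ω.2.1]⟩
    rw [ω.2.2, sub_add_cancel, hω]
  · rintro ⟨y, rfl, hωy⟩
    rw [hlev, ← ω.2.2, hωy]

theorem pairwise_disjoint_sector_children (hlev : ∀ x : T, lev (par x) = lev x + 1)
    (hfin : ∀ x : T, {y : T | par y = x}.Finite) (x : T) :
    ((hfin x).toFinset : Set T).Pairwise (Function.onFun Disjoint (sector par lev)) := by
  intro y hy z hz hne
  simp only [Finset.mem_coe, Set.Finite.mem_toFinset, Set.mem_ofPred_eq] at hy hz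
  exact disjoint_sector_of_lev_eq
    (by rw [lev_of_par_eq hlev hy, lev_of_par_eq hlev hz]) hne

theorem mnu_ne_zero {ν : Measure (PBoundary par lev)} {x : T} (h0 : ν (sector par lev x) ≠ 0)
    (htop : ν (sector par lev x) ≠ ⊤) : mnu par lev ν x ≠ 0 :=
  ENNReal.toReal_ne_zero.2 ⟨h0, htop⟩

theorem Harmonic.sum_children_mul_mnu {ν : Measure (PBoundary par lev)} {f : T → ℝ}
    (hf : Harmonic par lev ν f) (hfin : ∀ x : T, {y : T | par y = x}.Finite) {x : T}
    (hx : mnu par lev ν x ≠ 0) :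
    ∑ y ∈ (hfin x).toFinset, f y * mnu par lev ν y = f x * mnu par lev ν x := by
  have hharm := hf x
  rw [← (hfin x).coe_toFinset, finsum_mem_coe_finset] at hharm
  rw [hharm, Finset.sum_mul]
  refine Finset.sum_congr rfl fun y _ => ?_
  field_simp

theorem lev_sub_succ_of_par_eq (hlev : ∀ x : T, lev (par x) = lev x + 1) {x y : T}
    (h : par y = x) (n : ℕ) : lev x - ((n + 1 : ℕ) : ℤ) = lev y - n := by
  rw [lev_of_par_eq hlev h]
  push_cast
  ring

theorem eqOn_sector_slice_zero (f : T → ℝ) (x : T) :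
    Set.EqOn (fun ω : PBoundary par lev => f (ω.1 (lev x - (0 : ℕ)))) (fun _ => f x)
      (sector par lev x) := fun ω hω => by
  simp only [Nat.cast_zero, sub_zero]
  exact congrArg f hω

/-- Stated on a sector only: `ω ↦ ω j` need not be measurable on all of `∂T` when a level of `T`
is uncountable, while on `∂T_x` the slice is constant on each of finitely many subsectors. -/
theorem integrableOn_slice (hlev : ∀ x : T, lev (par x) = lev x + 1)
    (hfin : ∀ x : T, {y : T | par y = x}.Finite) {ν : Measure (PBoundary par lev)}
    (hν : ∀ x : T, ν (sector par lev x) ≠ ⊤) (f : T → ℝ) (n : ℕ) (x : T) :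
    IntegrableOn (fun ω : PBoundary par lev => f (ω.1 (lev x - n))) (sector par lev x) ν := by
  induction n generalizing x with
  | zero =>
    exact (integrableOn_const (hν x)).congr_fun (eqOn_sector_slice_zero f x).symm
      (measurableSet_sector x)
  | succ n ih =>
    rw [sector_eq_biUnion_sector_children hlev hfin x, integrableOn_finset_iUnion]
    intro y hy
    simpa only [lev_sub_succ_of_par_eq hlev ((hfin x).mem_toFinset.1 hy)] using ih y

theorem Harmonic.setIntegral_slice (hlev : ∀ x : T, lev (par x) = lev x + 1)
    (hfin : ∀ x : T, {y : T | par y = x}.Finite) {ν : Measure (PBoundary par lev)}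
    (hν : ∀ x : T, 0 < ν (sector par lev x) ∧ ν (sector par lev x) < ⊤) {f : T → ℝ}
    (hf : Harmonic par lev ν f) (n : ℕ) (x : T) :
    ∫ ω in sector par lev x, f (ω.1 (lev x - n)) ∂ν = f x * mnu par lev ν x := by
  induction n generalizing x with
  | zero =>
    rw [setIntegral_congr_fun (measurableSet_sector x) (eqOn_sector_slice_zero f x),
      setIntegral_const, smul_eq_mul, mul_comm]
    rfl
  | succ n ih =>
    rw [sector_eq_biUnion_sector_children hlev hfin x,
      integral_biUnion_finset _ (fun y _ => measurableSet_sector y)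
        (pairwise_disjoint_sector_children hlev hfin x)]
    · rw [← hf.sum_children_mul_mnu hfin (mnu_ne_zero (hν x).1.ne' (hν x).2.ne)]
      refine Finset.sum_congr rfl fun y hy => ?_
      rw [lev_sub_succ_of_par_eq hlev ((hfin x).mem_toFinset.1 hy), ih y]
    · intro y hy
      rw [lev_sub_succ_of_par_eq hlev ((hfin x).mem_toFinset.1 hy)]
      exact integrableOn_slice hlev hfin (fun y => (hν y).2.ne) f n y

end

theorem stmt3_general {T : Type*} (par : T → T) (lev : T → ℤ)
    (hlev : ∀ x : T, lev (par x) = lev x + 1)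
    (hfin : ∀ x : T, {y : T | par y = x}.Finite)
    (ν : Measure (PBoundary par lev))
    (hν : ∀ x : T, 0 < ν (sector par lev x) ∧ ν (sector par lev x) < ⊤)
    (f : T → ℝ) (hf : Harmonic par lev ν f)
    (M : ℝ) (hbdd : ∀ x : T, |f x| ≤ M)
    (g : PBoundary par lev → ℝ)
    (hext : ∀ᵐ ω ∂ν,
      Filter.Tendsto (fun j : ℤ => f (ω.1 j)) Filter.atBot (nhds (g ω))) :
    (∀ x : T, IntegrableOn g (sector par lev x) ν) ∧
      ∀ x : T, f x = (mnu par lev ν x)⁻¹ * ∫ ω in sector par lev x, g ω ∂ν := by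
  have hfinite (x : T) : IsFiniteMeasure (ν.restrict (sector par lev x)) :=
    isFiniteMeasure_restrict.2 (hν x).2.ne
  have hslice (x : T) (n : ℕ) :=
    (integrableOn_slice hlev hfin (fun x => (hν x).2.ne) f n x).aestronglyMeasurable
  have hlim (x : T) : ∀ᵐ ω ∂ν.restrict (sector par lev x),
      Tendsto (fun n : ℕ => f (ω.1 (lev x - n))) atTop (𝓝 (g ω)) := by
    have hdown : Tendsto (fun n : ℕ => lev x - n) atTop atBot :=
      (tendsto_atBot_add_const_left _ (lev x)
        (tendsto_neg_atTop_atBot.comp tendsto_natCast_atTop_atTop)).congr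
          fun n => (sub_eq_add_neg (lev x) n).symm
    exact ae_restrict_of_ae (hext.mono fun ω hω => hω.comp hdown)
  have hg (x : T) : IntegrableOn g (sector par lev x) ν :=
    (integrable_const M).mono' (aestronglyMeasurable_of_tendsto_ae _ (hslice x) (hlim x))
      ((hlim x).mono fun ω hω => le_of_tendsto' hω.norm fun n => hbdd _)
  refine ⟨hg, fun x => ?_⟩
  have hconv := tendsto_integral_of_dominated_convergence (fun _ => M) (hslice x)
    (integrable_const M) (fun n => ae_of_all _ fun ω => hbdd _) (hlim x)
  simp only [hf.setIntegral_slice hlev hfin hν] at hconv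
  rw [← tendsto_nhds_unique tendsto_const_nhds hconv, mul_comm (f x),
    inv_mul_cancel_left₀ (mnu_ne_zero (hν x).1.ne' (hν x).2.ne)]

/-- A bounded harmonic function on `T` admitting a boundary extension `g`
is the Poisson integral of `g`: `g` is integrable on every sector and
`f(x) = m_ν(x)⁻¹ ∫_{∂T_x} g dν` for every `x ∈ T`. -/
theorem stmt3 {T : Type*} [Nonempty T] (par : T → T) (lev : T → ℤ)
    (hlev : ∀ x : T, lev (par x) = lev x + 1)
    (hfin : ∀ x : T, {y : T | par y = x}.Finite)
    (hsucc : ∀ x : T, ∃ y : T, par y = x)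
    (hconn : ∀ x y : T, ∃ n m : ℕ, par^[n] x = par^[m] y)
    (ν : Measure (PBoundary par lev))
    (hν : ∀ x : T, 0 < ν (sector par lev x) ∧ ν (sector par lev x) < ⊤)
    (f : T → ℝ) (hf : Harmonic par lev ν f)
    (M : ℝ) (hbdd : ∀ x : T, |f x| ≤ M)
    (g : PBoundary par lev → ℝ)
    (hext : ∀ᵐ ω ∂ν,
      Filter.Tendsto (fun j : ℤ => f (ω.1 j)) Filter.atBot (nhds (g ω))) :
    (∀ x : T, IntegrableOn g (sector par lev x) ν) ∧
      ∀ x : T, f x = (mnu par lev ν x)⁻¹ * ∫ ω in sector par lev x, g ω ∂ν :=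
  stmt3_general par lev hlev hfin ν hν f hf M hbdd g hext
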